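/- arXiv:1701.08622 — 2 statements merged into one kernel-verified Lean document; each statement's English description precedes it below -/
import Mathlib

section
/- If a propositional program P is locally stratified — i.e., there is a function stratum from the propositional variables to the countable ordinals such that for every clause h ← A_1,...,A_m, ∼B_1,...,∼B_n of P, stratum(A_i) ≤ stratum(h) for all i ≤ m and stratum(B_j) < stratum(h) for all j ≤ n — and the dependency relation is well-founded accordingly, then P has at most one stable model restricted to each stratum determined inductively; in particular, for a finite locally stratified program with strata ordered by natural numbers, a stable model exists. -/
/-- A propositional clause h ← A₁,...,Aₘ, ∼B₁,...,∼Bₙ: head, positive body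
atoms and negated body atoms. -/
structure NClause (V : Type) : Type where
  head : V
  pos : List V
  neg : List V

/-- I is a stable model of the program Pr: I coincides with the least model
of the Gelfond–Lifschitz reduct Pr_I (obtained by dropping every clause with
a negative literal ∼b, b ∈ I, and dropping the remaining negative literals). -/
def IsStable {V : Type} (Pr : Set (NClause V)) (I : Set V) : Prop :=
  (∀ c ∈ Pr, (∀ b ∈ c.neg, b ∉ I) → (∀ a ∈ c.pos, a ∈ I) → c.head ∈ I) ∧
  (∀ J : Set V, (∀ c ∈ Pr, (∀ b ∈ c.neg, b ∉ I) → (∀ a ∈ c.pos, a ∈ J) → c.head ∈ J) →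
    I ⊆ J)

namespace AuxStrat

variable {V : Type} (Pr : Set (NClause V)) (stratum : V → ℕ)

/-- One stage: least set containing `P` and closed under clauses whose head
has stratum ≤ n, with negative atoms evaluated in `P`. -/
def step (P : Set V) (n : ℕ) : Set V :=
  ⋂₀ {J | P ⊆ J ∧ ∀ c ∈ Pr, stratum c.head ≤ n →
      (∀ b ∈ c.neg, b ∉ P) → (∀ a ∈ c.pos, a ∈ J) → c.head ∈ J}

lemma step_subset (P : Set V) (n : ℕ) : P ⊆ step Pr stratum P n := by
  intro v hv J hJ; exact hJ.1 hv

lemma step_least {P J : Set V} {n : ℕ} (h1 : P ⊆ J)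
    (h2 : ∀ c ∈ Pr, stratum c.head ≤ n → (∀ b ∈ c.neg, b ∉ P) →
      (∀ a ∈ c.pos, a ∈ J) → c.head ∈ J) :
    step Pr stratum P n ⊆ J := by
  intro v hv; exact hv J ⟨h1, h2⟩

lemma step_closed {P : Set V} {n : ℕ} :
    ∀ c ∈ Pr, stratum c.head ≤ n → (∀ b ∈ c.neg, b ∉ P) →
      (∀ a ∈ c.pos, a ∈ step Pr stratum P n) → c.head ∈ step Pr stratum P n := by
  intro c hc hle hneg hpos J hJ
  exact hJ.2 c hc hle hneg (fun a ha => hpos a ha J hJ)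

/-- The cumulative hierarchy of true atoms, stage by stage. -/
def S : ℕ → Set V
  | 0 => step Pr stratum ∅ 0
  | n + 1 => step Pr stratum (S n) (n + 1)

lemma S_succ (n : ℕ) : S Pr stratum (n + 1) = step Pr stratum (S Pr stratum n) (n + 1) := rfl

lemma mono_succ (n : ℕ) : S Pr stratum n ⊆ S Pr stratum (n + 1) := by
  rw [S_succ]; exact step_subset Pr stratum _ _

lemma mono {m n : ℕ} (h : m ≤ n) : S Pr stratum m ⊆ S Pr stratum n := by
  induction n with
  | zero => simp [Nat.le_zero.mp h]
  | succ n ih =>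
    rcases Nat.lt_or_ge m (n + 1) with h' | h'
    · exact (ih (Nat.lt_succ_iff.mp h')).trans (mono_succ Pr stratum n)
    · have : m = n + 1 := le_antisymm h h'
      simp [this]

variable (hstrat : ∀ c ∈ Pr, (∀ a ∈ c.pos, stratum a ≤ stratum c.head) ∧
        (∀ b ∈ c.neg, stratum b < stratum c.head))

include hstrat

/-- Key lemma: stage n+1 adds no new atoms of stratum ≤ n. -/
lemma agree (n : ℕ) : ∀ v ∈ S Pr stratum (n + 1), stratum v ≤ n → v ∈ S Pr stratum n := by
  set J₀ : Set V := S Pr stratum n ∪ {v | v ∈ S Pr stratum (n + 1) ∧ n < stratum v} with hJ₀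
  have hsub : S Pr stratum (n + 1) ⊆ J₀ := by
    rw [S_succ]
    apply step_least
    · exact Set.subset_union_left
    · intro c hc hle hneg hpos
      have hposS : ∀ a ∈ c.pos, a ∈ S Pr stratum (n + 1) := by
        intro a ha
        rcases hpos a ha with h | h
        · exact mono_succ Pr stratum n h
        · exact h.1
      have hheadS : c.head ∈ S Pr stratum (n + 1) := by
        rw [S_succ]
        exact step_closed Pr stratum c hc hle hneg hposS
      rcases Nat.lt_or_ge n (stratum c.head) with hgt | hle'
      · exact Or.inr ⟨hheadS, hgt⟩
      · -- stratum c.head ≤ n : show c.head ∈ S n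
        left
        have hposn : ∀ a ∈ c.pos, a ∈ S Pr stratum n := by
          intro a ha
          rcases hpos a ha with h | h
          · exact h
          · exact absurd (((hstrat c hc).1 a ha).trans hle') (Nat.not_le.mpr h.2)
        cases n with
        | zero =>
          exact step_closed Pr stratum c hc hle' (fun b hb hbm => hbm) hposn
        | succ m =>
          refine step_closed Pr stratum c hc hle' ?_ hposn
          intro b hb hbm
          exact hneg b hb (mono_succ Pr stratum m hbm)
  intro v hv hle
  rcases hsub hv with h | h
  · exact h
  · exact absurd hle (Nat.not_le.mpr h.2)

/-- Membership at stratum ≤ n is determined by stage n. -/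
lemma down {v : V} {n : ℕ} : ∀ m, v ∈ S Pr stratum m → stratum v ≤ n → v ∈ S Pr stratum n := by
  intro m
  induction m with
  | zero => intro hv _; exact mono Pr stratum (Nat.zero_le n) hv
  | succ m ih =>
    intro hv hle
    rcases Nat.lt_or_ge n (m + 1) with h | h
    · exact ih (agree Pr stratum hstrat m v hv (hle.trans (Nat.lt_succ_iff.mp h))) hle
    · exact mono Pr stratum h hv

/-- Stabilization: once all heads' strata are ≤ N, the hierarchy is constant. -/
lemma stab {N : ℕ} (hN : ∀ c ∈ Pr, stratum c.head ≤ N) :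
    S Pr stratum (N + 1) = S Pr stratum N := by
  apply le_antisymm
  · intro v hv
    have hheads : S Pr stratum (N + 1) ⊆
        S Pr stratum N ∪ {v | ∃ c ∈ Pr, c.head = v} := by
      rw [S_succ]
      apply step_least
      · exact Set.subset_union_left
      · intro c hc _ _ _
        exact Or.inr ⟨c, hc, rfl⟩
    rcases hheads hv with h | h
    · exact h
    · rcases h with ⟨c, hc, rfl⟩
      exact agree Pr stratum hstrat N _ hv (hN c hc)
  · exact mono_succ Pr stratum N

end AuxStrat

/-- a finite locally stratified propositional program (strata
ordered by natural numbers: positive body atoms have stratum ≤ that of the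
head, negated body atoms strictly smaller stratum) has a stable model. -/
theorem stable_model_exists_of_locally_stratified (V : Type)
    (Pr : Set (NClause V)) (hfin : Pr.Finite) (stratum : V → ℕ)
    (hstrat : ∀ c ∈ Pr, (∀ a ∈ c.pos, stratum a ≤ stratum c.head) ∧
        (∀ b ∈ c.neg, stratum b < stratum c.head)) :
    ∃ I : Set V, IsStable Pr I := by
  classical
  set N : ℕ := hfin.toFinset.sup (fun c => stratum c.head) with hNdef
  have hN : ∀ c ∈ Pr, stratum c.head ≤ N := by
    intro c hc
    exact Finset.le_sup (f := fun c => stratum c.head) (hfin.mem_toFinset.mpr hc)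
  refine ⟨AuxStrat.S Pr stratum N, ?_, ?_⟩
  · -- closure under the reduct
    intro c hc hneg hpos
    have : c.head ∈ AuxStrat.S Pr stratum (N + 1) := by
      rw [AuxStrat.S_succ]
      exact AuxStrat.step_closed Pr stratum c hc ((hN c hc).trans (Nat.le_succ N)) hneg
        (fun a ha => AuxStrat.mono_succ Pr stratum N (hpos a ha))
    rwa [AuxStrat.stab Pr stratum hstrat hN] at this
  · -- minimality among models of the reduct
    intro J hJ
    have main : ∀ n, AuxStrat.S Pr stratum n ⊆ J := by
      intro n
      induction n with
      | zero =>
        apply AuxStrat.step_least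
        · exact Set.empty_subset J
        · intro c hc hle _ hpos
          refine hJ c hc ?_ hpos
          intro b hb _
          have := (hstrat c hc).2 b hb
          omega
      | succ n ih =>
        rw [AuxStrat.S_succ]
        apply AuxStrat.step_least
        · exact ih
        · intro c hc hle hneg hpos
          refine hJ c hc ?_ hpos
          intro b hb hbI
          have hblt : stratum b < stratum c.head := (hstrat c hc).2 b hb
          have hble : stratum b ≤ n := by omega
          exact hneg b hb (AuxStrat.down Pr stratum hstrat N hbI hble)
    exact main N
end

section
/- Every stratified higher-order program is locally stratified. Concretely: suppose the predicate constants of a program P are partitioned into finitely many strata S_1,...,S_r such that for every clause, every predicate constant heading a positive body atom (or any predicate constant whose type is greater than or equal to the type of a predicate variable heading a positive body atom) has stratum ≤ the stratum of the head predicate, and analogously with strict inequality for negated body atoms. Define stratum(A) for a ground atom A to be the stratum of its leftmost predicate constant. Then for every ground instance H ← A_1,...,A_m, ∼B_1,...,∼B_n of a clause of P, stratum(A_i) ≤ stratum(H) for all i and stratum(B_j) < stratum(H) for all j. -/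
/-- Types: base types ι and o, and arrow types. -/
inductive Ty : Type where
  | iota : Ty
  | o : Ty
  | arr : Ty → Ty → Ty

/-- π is strictly greater than π': π = ρ₁ → ⋯ → ρₙ → π' with n ≥ 1. -/
def Ty.gt : Ty → Ty → Prop
  | .arr _ π, π' => π = π' ∨ Ty.gt π π'
  | _, _ => False

/-- π is greater than or equal to π'. -/
def Ty.ge (π π' : Ty) : Prop := π = π' ∨ Ty.gt π π'

/-- Terms of a higher-order program: predicate constants (PC), variables
(Vr), individual constants (IC), applications of function symbols (FN), and
application. -/
inductive Tm (PC Vr IC FN : Type) : Type where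
  | pc : PC → Tm PC Vr IC FN
  | var : Vr → Tm PC Vr IC FN
  | ic : IC → Tm PC Vr IC FN
  | fapp : FN → Tm PC Vr IC FN → Tm PC Vr IC FN
  | app : Tm PC Vr IC FN → Tm PC Vr IC FN → Tm PC Vr IC FN

variable {PC Vr IC FN : Type}

/-- The leftmost predicate constant of a term, if any. -/
def Tm.headPC : Tm PC Vr IC FN → Option PC
  | .pc p => some p
  | .app t _ => t.headPC
  | _ => none

/-- The leftmost variable of a term, if any. -/
def Tm.headVar : Tm PC Vr IC FN → Option Vr
  | .var v => some v
  | .app t _ => t.headVar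
  | _ => none

/-- A term is ground if it contains no variables. -/
def Tm.ground : Tm PC Vr IC FN → Prop
  | .pc _ => True
  | .var _ => False
  | .ic _ => True
  | .fapp _ t => t.ground
  | .app t u => t.ground ∧ u.ground

/-- All predicate constants of the term belong to S (the symbols appearing in
the program). -/
def Tm.constsIn (S : Set PC) : Tm PC Vr IC FN → Prop
  | .pc p => p ∈ S
  | .var _ => True
  | .ic _ => True
  | .fapp _ t => t.constsIn S
  | .app t u => t.constsIn S ∧ u.constsIn S

/-- Application of a substitution θ to a term. -/
def Tm.subst (θ : Vr → Tm PC Vr IC FN) : Tm PC Vr IC FN → Tm PC Vr IC FN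
  | .pc p => .pc p
  | .var v => θ v
  | .ic c => .ic c
  | .fapp f t => .fapp f (t.subst θ)
  | .app t u => .app (t.subst θ) (u.subst θ)

/-- Typing of terms, given the types of predicate constants and variables. -/
inductive HasTy (cty : PC → Ty) (vty : Vr → Ty) : Tm PC Vr IC FN → Ty → Prop where
  | pc (p : PC) : HasTy cty vty (.pc p) (cty p)
  | var (v : Vr) : HasTy cty vty (.var v) (vty v)
  | ic (c : IC) : HasTy cty vty (.ic c) .iota
  | fapp (f : FN) {t : Tm PC Vr IC FN} :
      HasTy cty vty t .iota → HasTy cty vty (.fapp f t) .iota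
  | app {t u : Tm PC Vr IC FN} {ρ π : Ty} :
      HasTy cty vty t (.arr ρ π) → HasTy cty vty u ρ → HasTy cty vty (.app t u) π

/-- A higher-order clause p V₁ ⋯ Vₖ ← A₁,...,Aₘ, ∼B₁,...,∼Bₙ: head predicate
constant, positive body atoms and negated body atoms. -/
structure HClause (PC Vr IC FN : Type) : Type where
  head : PC
  pos : List (Tm PC Vr IC FN)
  neg : List (Tm PC Vr IC FN)

lemma Ty.gt_arr {a ρ π : Ty} (h : Ty.gt a (.arr ρ π)) : Ty.gt a π := by
  induction a with
  | iota => exact h.elim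
  | o => exact h.elim
  | arr ρ' π' ih1 ih2 =>
    rcases h with h | h
    · subst h; exact Or.inr (Or.inl rfl)
    · exact Or.inr (ih2 h)

lemma Ty.ge_arr {a ρ π : Ty} (h : Ty.ge a (.arr ρ π)) : Ty.ge a π := by
  rcases h with h | h
  · subst h; exact Or.inr (Or.inl rfl)
  · exact Or.inr (Ty.gt_arr h)

lemma headPC_subst (θ : Vr → Tm PC Vr IC FN) :
    ∀ t : Tm PC Vr IC FN,
      (∀ q, t.headPC = some q → (t.subst θ).headPC = some q) ∧
      (∀ V, t.headVar = some V → (t.subst θ).headPC = (θ V).headPC) := by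
  intro t
  induction t with
  | pc p => exact ⟨fun q h => h, fun V h => by simp [Tm.headVar] at h⟩
  | var v =>
    refine ⟨fun q h => by simp [Tm.headPC] at h, fun V h => ?_⟩
    simp [Tm.headVar] at h; subst h; rfl
  | ic c => exact ⟨fun q h => by simp [Tm.headPC] at h,
      fun V h => by simp [Tm.headVar] at h⟩
  | fapp f t ih => exact ⟨fun q h => by simp [Tm.headPC] at h,
      fun V h => by simp [Tm.headVar] at h⟩
  | app t u iht ihu => exact ⟨fun q h => iht.1 q h, fun V h => iht.2 V h⟩

lemma head_exists {cty : PC → Ty} {vty : Vr → Ty} {t : Tm PC Vr IC FN} {π : Ty}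
    (h : HasTy cty vty t π) (hπ : π ≠ .iota) :
    (∃ q, t.headPC = some q) ∨ (∃ V, t.headVar = some V) := by
  induction h with
  | pc p => exact Or.inl ⟨p, rfl⟩
  | var v => exact Or.inr ⟨v, rfl⟩
  | ic c => exact absurd rfl hπ
  | fapp f _ _ => exact absurd rfl hπ
  | app ht hu iht ihu => exact iht (by intro h; cases h)

lemma ground_head_pc {cty : PC → Ty} {vty : Vr → Ty} {t : Tm PC Vr IC FN} {π : Ty}
    (h : HasTy cty vty t π) (hg : t.ground) (hπ : π ≠ .iota) :
    ∃ q, t.headPC = some q := by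
  induction h with
  | pc p => exact ⟨p, rfl⟩
  | var v => exact hg.elim
  | ic c => exact absurd rfl hπ
  | fapp f _ _ => exact absurd rfl hπ
  | app ht hu iht ihu => exact iht hg.1 (by intro h; cases h)

lemma headPC_ty_ge {cty : PC → Ty} {vty : Vr → Ty} {t : Tm PC Vr IC FN} {π : Ty}
    (h : HasTy cty vty t π) : ∀ q, t.headPC = some q → Ty.ge (cty q) π := by
  induction h with
  | pc p => intro q hq; cases hq; exact Or.inl rfl
  | var v => intro q hq; simp [Tm.headPC] at hq
  | ic c => intro q hq; simp [Tm.headPC] at hq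
  | fapp f _ _ => intro q hq; simp [Tm.headPC] at hq
  | app ht hu iht ihu => intro q hq; exact Ty.ge_arr (iht q hq)

lemma headVar_ty_ge {cty : PC → Ty} {vty : Vr → Ty} {t : Tm PC Vr IC FN} {π : Ty}
    (h : HasTy cty vty t π) : ∀ V, t.headVar = some V → Ty.ge (vty V) π := by
  induction h with
  | pc p => intro V hV; simp [Tm.headVar] at hV
  | var v => intro V hV; cases hV; exact Or.inl rfl
  | ic c => intro V hV; simp [Tm.headVar] at hV
  | fapp f _ _ => intro V hV; simp [Tm.headVar] at hV
  | app ht hu iht ihu => intro V hV; exact Ty.ge_arr (iht V hV)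

lemma headPC_mem {S : Set PC} : ∀ {t : Tm PC Vr IC FN},
    t.constsIn S → ∀ q, t.headPC = some q → q ∈ S := by
  intro t
  induction t with
  | pc p => intro h q hq; cases hq; exact h
  | var v => intro h q hq; simp [Tm.headPC] at hq
  | ic c => intro h q hq; simp [Tm.headPC] at hq
  | fapp f t ih => intro h q hq; simp [Tm.headPC] at hq
  | app t u iht ihu => intro h q hq; exact iht h.1 q hq

/-- The key step, uniform in the strict/non-strict comparison. -/
lemma key_step {cty : PC → Ty} {vty : Vr → Ty} {appears : Set PC}
    (R : PC → Prop) (A : Tm PC Vr IC FN)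
    (hA : HasTy cty vty A .o)
    (h1 : ∀ q : PC, A.headPC = some q → R q)
    (h2 : ∀ V : Vr, A.headVar = some V → ∀ q ∈ appears,
          Ty.ge (cty q) (vty V) → R q)
    (θ : Vr → Tm PC Vr IC FN)
    (hθ : ∀ V : Vr, (θ V).ground ∧ (θ V).constsIn appears ∧
        HasTy cty vty (θ V) (vty V)) :
    ∃ q : PC, (A.subst θ).headPC = some q ∧ R q := by
  rcases head_exists hA (by intro h; cases h) with ⟨q, hq⟩ | ⟨V, hV⟩
  · exact ⟨q, (headPC_subst θ A).1 q hq, h1 q hq⟩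
  · have hge := headVar_ty_ge hA V hV
    have hne : vty V ≠ .iota := by
      intro h; rw [h] at hge; rcases hge with h' | h' <;> cases h'
    obtain ⟨Vg, VcI, VT⟩ := hθ V
    obtain ⟨q, hq⟩ := ground_head_pc VT Vg hne
    refine ⟨q, ?_, h2 V hV q (headPC_mem VcI q hq) (headPC_ty_ge VT q hq)⟩
    rw [(headPC_subst θ A).2 V hV, hq]

/-- every stratified higher-order program is locally
stratified: if the predicate constants are assigned finitely many strata
(stratum p < r) satisfying the four stratification conditions, then in every
ground instance of a clause, each positive body atom has a leftmost predicate
constant of stratum ≤ that of the head predicate, and each negated body atom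
one of strictly smaller stratum. -/
theorem stratified_implies_locally_stratified
    (PC Vr IC FN : Type) (cty : PC → Ty) (vty : Vr → Ty)
    (Pr : Set (HClause PC Vr IC FN)) (appears : Set PC)
    (stratum : PC → ℕ) (r : ℕ) (hr : ∀ p : PC, stratum p < r)
    (hwt : ∀ c ∈ Pr, (∀ A ∈ c.pos, HasTy cty vty A .o) ∧
        (∀ B ∈ c.neg, HasTy cty vty B .o))
    (hpos : ∀ c ∈ Pr, ∀ A ∈ c.pos,
        (∀ q : PC, A.headPC = some q → stratum q ≤ stratum c.head) ∧
        (∀ V : Vr, A.headVar = some V → ∀ q ∈ appears,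
          Ty.ge (cty q) (vty V) → stratum q ≤ stratum c.head))
    (hneg : ∀ c ∈ Pr, ∀ B ∈ c.neg,
        (∀ q : PC, B.headPC = some q → stratum q < stratum c.head) ∧
        (∀ V : Vr, B.headVar = some V → ∀ q ∈ appears,
          Ty.ge (cty q) (vty V) → stratum q < stratum c.head))
    (c : HClause PC Vr IC FN) (hc : c ∈ Pr) (θ : Vr → Tm PC Vr IC FN)
    (hθ : ∀ V : Vr, (θ V).ground ∧ (θ V).constsIn appears ∧
        HasTy cty vty (θ V) (vty V)) :
    (∀ A ∈ c.pos, ∃ q : PC, (A.subst θ).headPC = some q ∧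
        stratum q ≤ stratum c.head) ∧
    (∀ B ∈ c.neg, ∃ q : PC, (B.subst θ).headPC = some q ∧
        stratum q < stratum c.head) := by
  constructor
  · intro A hA
    exact key_step (fun q => stratum q ≤ stratum c.head) A
      ((hwt c hc).1 A hA) (hpos c hc A hA).1 (hpos c hc A hA).2 θ hθ
  · intro B hB
    exact key_step (fun q => stratum q < stratum c.head) B
      ((hwt c hc).2 B hB) (hneg c hc B hB).1 (hneg c hc B hB).2 θ hθ
end
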